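/- Let S be a numerical semigroup with m(S) − ν(S) ≥ 2. If ⌊w_{m−1}/m⌋ = ⌊w_1/m⌋ + ⌊w_2/m⌋ (where m = m(S)), then n_L ≥ 3. -/

import Mathlib

/-!
Write `w_i = q_i m + r_i` and `f = L m + ρ` with `r_i, ρ < m`. Since `w_{m-1} = f + m`, the
hypothesis reads `q_1 + q_2 = L + 1`; as `q_1, q_2 ≥ 1`, both are at most `L`, so `L m + r_1` and
`L m + r_2` lie in `S`. Every minimal generating set contains `m` and all nonzero Apéry elements
that are not sums of two nonzero elements of `S`, so `m - ν ≥ 2` yields two Apéry elements that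
are such sums. One of them differs from `2 w_1`, hence is at least `w_1 + w_2`, which gives
`w_1 + w_2 ≤ w_{m-1} = f + m`, i.e. `r_1 + r_2 ≤ ρ`. The residues `r_1 ≠ r_2` are nonzero, so
`L m`, `L m + r_1`, `L m + r_2` are three elements of `S ∩ I_L` below `f`.
-/

/-- A numerical semigroup: an additive submonoid of `ℕ` (containing `0`, closed under
addition) whose complement in `ℕ` is finite. -/
structure NumericalSemigroup where
  carrier : Set ℕ
  zero_mem : 0 ∈ carrier
  add_mem : ∀ ⦃a b : ℕ⦄, a ∈ carrier → b ∈ carrier → a + b ∈ carrier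
  cofinite : (carrierᶜ : Set ℕ).Finite

namespace NumericalSemigroup

/-- The multiplicity `m(S)`: the smallest positive element of `S`. -/
noncomputable def mult (S : NumericalSemigroup) : ℕ :=
  sInf {s : ℕ | s ∈ S.carrier ∧ 0 < s}

/-- The embedding dimension `ν(S)`: the cardinality of the (unique) minimal system of
generators of `S`, i.e. the least cardinality of a generating set. -/
noncomputable def embdim (S : NumericalSemigroup) : ℕ :=
  sInf {n : ℕ | ∃ G : Finset ℕ,
    S.carrier = (AddSubmonoid.closure (G : Set ℕ) : Set ℕ) ∧ G.card = n}

/-- The Frobenius number `f(S)`: the largest integer not belonging to `S`. -/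
noncomputable def frob (S : NumericalSemigroup) : ℤ :=
  sSup {x : ℤ | ∀ s ∈ S.carrier, (s : ℤ) ≠ x}

/-- `n(S)`: the number of elements of `S` smaller than the Frobenius number. -/
noncomputable def small (S : NumericalSemigroup) : ℕ :=
  {s : ℕ | s ∈ S.carrier ∧ (s : ℤ) < S.frob}.ncard

/-- The type `t(S)`: the number of pseudo-Frobenius numbers of `S`, i.e. integers
`x ∉ S` such that `x + s ∈ S` for every nonzero `s ∈ S`. -/
noncomputable def typ (S : NumericalSemigroup) : ℕ :=
  {x : ℤ | (∀ s ∈ S.carrier, (s : ℤ) ≠ x) ∧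
    ∀ s ∈ S.carrier, 0 < s → ∃ u ∈ S.carrier, (u : ℤ) = x + s}.ncard

/-- The `k`-th interval `I_k = [k·m, (k+1)·m - 1]` (for a given `m`). -/
def interval (m k : ℕ) : Set ℕ := Set.Ico (k * m) ((k + 1) * m)

/-- `n_k`: the number of elements of `S ∩ I_k` smaller than the Frobenius number. -/
noncomputable def nk (S : NumericalSemigroup) (k : ℕ) : ℕ :=
  {s : ℕ | s ∈ S.carrier ∩ interval S.mult k ∧ (s : ℤ) < S.frob}.ncard

/-- `L = ⌊f(S)/m(S)⌋`. -/
noncomputable def Lindex (S : NumericalSemigroup) : ℤ := S.frob / (S.mult : ℤ)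

/-- `ρ = f(S) + 1 - L·m(S)`. -/
noncomputable def rho (S : NumericalSemigroup) : ℤ :=
  S.frob + 1 - S.Lindex * (S.mult : ℤ)

/-- The Apéry set `Ap(S) = {w ∈ S : w - m(S) ∉ S}`. -/
def apery (S : NumericalSemigroup) : Set ℕ :=
  {w : ℕ | w ∈ S.carrier ∧ ∀ u ∈ S.carrier, u + S.mult ≠ w}

theorem apery_finite (S : NumericalSemigroup) : S.apery.Finite := by
  apply Set.Finite.subset ((Set.finite_Iio S.mult).union (S.cofinite.image (· + S.mult)))
  intro x hx
  by_cases h : x < S.mult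
  · exact Or.inl h
  · refine Or.inr ⟨x - S.mult, fun hmem => hx.2 _ hmem (by omega), ?_⟩
    show x - S.mult + S.mult = x
    omega

/-- `w j`: the `(j+1)`-st smallest element of the Apéry set, so that
`Ap(S) = {w 0 < w 1 < ... < w (m-1)}` with `w 0 = 0`. -/
noncomputable def w (S : NumericalSemigroup) (j : ℕ) : ℕ :=
  (S.apery_finite.toFinset.sort (· ≤ ·)).getD j 0

/-- `ε_j`: the number of `k ∈ {0, ..., L-1}` such that `|I_k ∩ S| = j`. -/
noncomputable def eps (S : NumericalSemigroup) (j : ℕ) : ℕ :=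
  {k : ℕ | (k : ℤ) < S.Lindex ∧ (S.carrier ∩ interval S.mult k).ncard = j}.ncard

/-- `η_j`: the number of `k ∈ ℕ` such that `|I_k ∩ S| = j`. -/
noncomputable def eta (S : NumericalSemigroup) (j : ℕ) : ℕ :=
  {k : ℕ | (S.carrier ∩ interval S.mult k).ncard = j}.ncard

lemma exists_forall_le_mem (S : NumericalSemigroup) :
    ∃ N, ∀ n, N ≤ n → n ∈ S.carrier := by
  obtain ⟨N, hN⟩ := S.cofinite.bddAbove
  exact ⟨N + 1, fun n hn => by_contra fun hc => absurd (hN hc) (by omega)⟩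

lemma mult_mem_and_pos (S : NumericalSemigroup) : S.mult ∈ S.carrier ∧ 0 < S.mult := by
  obtain ⟨N, hN⟩ := S.exists_forall_le_mem
  exact Nat.sInf_mem (s := {s | s ∈ S.carrier ∧ 0 < s}) ⟨N + 1, hN _ (by omega), by omega⟩

lemma mult_mem (S : NumericalSemigroup) : S.mult ∈ S.carrier := S.mult_mem_and_pos.1

lemma mult_pos (S : NumericalSemigroup) : 0 < S.mult := S.mult_mem_and_pos.2

lemma mult_le {S : NumericalSemigroup} {s : ℕ} (hs : s ∈ S.carrier) (h0 : s ≠ 0) :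
    S.mult ≤ s :=
  Nat.sInf_le ⟨hs, Nat.pos_of_ne_zero h0⟩

lemma add_mul_mult_mem {S : NumericalSemigroup} {s : ℕ} (hs : s ∈ S.carrier) (k : ℕ) :
    s + k * S.mult ∈ S.carrier := by
  induction k with
  | zero => simpa using hs
  | succ k ih => simpa [Nat.succ_mul, ← add_assoc] using S.add_mem ih S.mult_mem

lemma mul_mult_mem (S : NumericalSemigroup) (k : ℕ) : k * S.mult ∈ S.carrier := by
  simpa using add_mul_mult_mem S.zero_mem k

lemma frob_eq {S : NumericalSemigroup} {F : ℕ} (hF : F ∉ S.carrier)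
    (hgt : ∀ n, F < n → n ∈ S.carrier) : S.frob = F := by
  refine IsGreatest.csSup_eq ⟨fun s hs h => hF (by rwa [← Nat.cast_inj.mp h]), fun x hx => ?_⟩
  by_contra! hlt
  exact hx x.toNat (hgt _ (by omega)) (by omega)

lemma exists_frob_eq {S : NumericalSemigroup} (h1 : 1 ∉ S.carrier) :
    ∃ F : ℕ, S.frob = F ∧ F ∉ S.carrier ∧ ∀ n, F < n → n ∈ S.carrier := by
  have hmem : sSup S.carrierᶜ ∈ S.carrierᶜ := Nat.sSup_mem ⟨1, h1⟩ S.cofinite.bddAbove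
  have hgt : ∀ n, sSup S.carrierᶜ < n → n ∈ S.carrier := fun n hn =>
    by_contra fun hc => (le_csSup S.cofinite.bddAbove hc).not_gt hn
  exact ⟨_, frob_eq hmem hgt, hmem, hgt⟩

lemma zero_mem_apery (S : NumericalSemigroup) : 0 ∈ S.apery :=
  ⟨S.zero_mem, fun u _ h => by have := S.mult_pos; omega⟩

lemma mult_notMem_apery (S : NumericalSemigroup) : S.mult ∉ S.apery :=
  fun h => h.2 0 S.zero_mem (zero_add _)

lemma mem_apery_of_add_mem_apery {S : NumericalSemigroup} {b c : ℕ} (hb : b ∈ S.carrier)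
    (hc : c ∈ S.carrier) (h : b + c ∈ S.apery) : b ∈ S.apery :=
  ⟨hb, fun u hu hub => h.2 (u + c) (S.add_mem hu hc) (by omega)⟩

lemma exists_mem_apery_add_mul {S : NumericalSemigroup} {s : ℕ} (hs : s ∈ S.carrier) :
    ∃ a ∈ S.apery, ∃ k, s = a + k * S.mult := by
  induction s using Nat.strong_induction_on with
  | _ s ih =>
    by_cases hap : ∃ u ∈ S.carrier, u + S.mult = s
    · obtain ⟨u, hu, rfl⟩ := hap
      obtain ⟨a, ha, k, rfl⟩ := ih u (by have := S.mult_pos; omega) hu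
      exact ⟨a, ha, k + 1, by ring⟩
    · exact ⟨s, ⟨hs, fun u hu h => hap ⟨u, hu, h⟩⟩, 0, by simp⟩

lemma apery_injOn_mod (S : NumericalSemigroup) : Set.InjOn (· % S.mult) S.apery := by
  intro a ha b hb hmod
  wlog hab : a ≤ b generalizing a b
  · exact (this hb ha hmod.symm (le_of_not_ge hab)).symm
  obtain ⟨k, hk⟩ := (Nat.modEq_iff_dvd' hab).mp hmod
  rcases k with _ | k
  · omega
  · exact absurd (by rw [mul_add, mul_one, mul_comm] at hk; omega)
      (hb.2 (a + k * S.mult) (add_mul_mult_mem ha.1 k))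

lemma mod_ne_zero_of_mem_apery {S : NumericalSemigroup} {a : ℕ} (ha : a ∈ S.apery)
    (h0 : a ≠ 0) : a % S.mult ≠ 0 :=
  fun h => h0 (S.apery_injOn_mod ha S.zero_mem_apery (by simpa using h))

lemma image_mod_apery (S : NumericalSemigroup) : (· % S.mult) '' S.apery = Set.Iio S.mult := by
  refine Set.Subset.antisymm (Set.image_subset_iff.mpr fun a _ => Nat.mod_lt a S.mult_pos)
    fun r (hr : r < S.mult) => ?_
  obtain ⟨N, hN⟩ := S.exists_forall_le_mem
  obtain ⟨a, ha, k, hk⟩ := exists_mem_apery_add_mul (hN (N * S.mult + r) (by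
    have := Nat.le_mul_of_pos_right N S.mult_pos; omega))
  refine ⟨a, ha, ?_⟩
  have := congrArg (· % S.mult) hk
  simp only [Nat.add_mul_mod_self_right, Nat.mul_add_mod_self_right, Nat.mod_eq_of_lt hr] at this
  exact this.symm

lemma card_apery (S : NumericalSemigroup) : S.apery_finite.toFinset.card = S.mult := by
  rw [← Set.ncard_eq_toFinset_card _ S.apery_finite, ← S.apery_injOn_mod.ncard_image,
    image_mod_apery, ← Finset.coe_range, Set.ncard_coe_finset, Finset.card_range]

lemma le_add_mult_of_mem_apery {S : NumericalSemigroup} {F a : ℕ}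
    (hgt : ∀ n, F < n → n ∈ S.carrier) (ha : a ∈ S.apery) : a ≤ F + S.mult := by
  by_contra! h
  exact ha.2 (a - S.mult) (hgt _ (by omega)) (by omega)

lemma add_mult_mem_apery {S : NumericalSemigroup} {F : ℕ} (hF : F ∉ S.carrier)
    (hgt : ∀ n, F < n → n ∈ S.carrier) : F + S.mult ∈ S.apery :=
  ⟨hgt _ (by have := S.mult_pos; omega),
    fun u hu h => hF (by rwa [Nat.add_right_cancel h] at hu)⟩

lemma length_sort_apery (S : NumericalSemigroup) :
    (S.apery_finite.toFinset.sort (· ≤ ·)).length = S.mult := by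
  rw [Finset.length_sort, card_apery]

lemma w_eq_getElem (S : NumericalSemigroup) {j : ℕ} (hj : j < S.mult) :
    S.w j = (S.apery_finite.toFinset.sort (· ≤ ·))[j]'(S.length_sort_apery ▸ hj) :=
  List.getD_eq_getElem _ _ _

lemma w_mem_apery (S : NumericalSemigroup) {j : ℕ} (hj : j < S.mult) : S.w j ∈ S.apery := by
  rw [w_eq_getElem S hj]
  exact S.apery_finite.mem_toFinset.mp ((Finset.mem_sort _).mp (List.getElem_mem _))

lemma w_lt_w (S : NumericalSemigroup) {i j : ℕ} (hij : i < j) (hj : j < S.mult) :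
    S.w i < S.w j := by
  rw [w_eq_getElem S hj, w_eq_getElem S (hij.trans hj)]
  exact (Finset.sortedLT_sort _).strictMono_get (show (⟨i, _⟩ : Fin _) < ⟨j, _⟩ from hij)

lemma w_le_w (S : NumericalSemigroup) {i j : ℕ} (hij : i ≤ j) (hj : j < S.mult) :
    S.w i ≤ S.w j :=
  hij.eq_or_lt.elim (fun h => h ▸ le_rfl) fun h => (S.w_lt_w h hj).le

lemma exists_w_eq {S : NumericalSemigroup} {a : ℕ} (ha : a ∈ S.apery) :
    ∃ j < S.mult, S.w j = a := by
  obtain ⟨⟨j, hj⟩, hget⟩ := List.mem_iff_get.mp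
    ((Finset.mem_sort (r := (· ≤ ·))).mpr (S.apery_finite.mem_toFinset.mpr ha))
  have hjm : j < S.mult := S.length_sort_apery ▸ hj
  exact ⟨j, hjm, by rw [w_eq_getElem S hjm]; exact hget⟩

lemma w_zero (S : NumericalSemigroup) : S.w 0 = 0 := by
  obtain ⟨j, hj, hw⟩ := exists_w_eq S.zero_mem_apery
  have := S.w_le_w (Nat.zero_le j) hj
  omega

lemma w_le_of_mem_apery (S : NumericalSemigroup) {j a : ℕ} (ha : a ∈ S.apery)
    (hne : ∀ i < j, S.w i ≠ a) : S.w j ≤ a := by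
  obtain ⟨k, hk, rfl⟩ := exists_w_eq ha
  exact S.w_le_w (not_lt.mp fun hkj => hne k hkj rfl) hk

lemma w_mult_sub_one {S : NumericalSemigroup} {F : ℕ} (hF : F ∉ S.carrier)
    (hgt : ∀ n, F < n → n ∈ S.carrier) : S.w (S.mult - 1) = F + S.mult := by
  have hm := S.mult_pos
  obtain ⟨j, hj, hwj⟩ := exists_w_eq (add_mult_mem_apery hF hgt)
  have := S.w_le_w (Nat.le_sub_one_of_lt hj) (by omega)
  have := le_add_mult_of_mem_apery hgt (S.w_mem_apery (j := S.mult - 1) (by omega))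
  omega

def IsDecomposable (S : NumericalSemigroup) (a : ℕ) : Prop :=
  ∃ b ∈ S.carrier, ∃ c ∈ S.carrier, b ≠ 0 ∧ c ≠ 0 ∧ b + c = a

def toAddSubmonoid (S : NumericalSemigroup) : AddSubmonoid ℕ where
  carrier := S.carrier
  add_mem' := fun ha hb => S.add_mem ha hb
  zero_mem' := S.zero_mem

lemma carrier_eq_closure_insert_mult_apery (S : NumericalSemigroup) :
    S.carrier =
      AddSubmonoid.closure ((insert S.mult S.apery_finite.toFinset : Finset ℕ) : Set ℕ) := by
  set G := AddSubmonoid.closure ((insert S.mult S.apery_finite.toFinset : Finset ℕ) : Set ℕ)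
  refine Set.Subset.antisymm (fun s hs => ?_) ?_
  · obtain ⟨a, ha, k, rfl⟩ := exists_mem_apery_add_mul hs
    have hmem : ∀ x, x = S.mult ∨ x ∈ S.apery → x ∈ G := fun x hx =>
      AddSubmonoid.subset_closure (by simpa using hx)
    simpa [nsmul_eq_mul] using
      G.add_mem (hmem a (.inr ha)) (G.nsmul_mem (hmem S.mult (.inl rfl)) k)
  · show G ≤ S.toAddSubmonoid
    rw [AddSubmonoid.closure_le, Finset.coe_insert]
    rintro x (rfl | hx)
    exacts [S.mult_mem, (S.apery_finite.mem_toFinset.mp hx).1]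

lemma mem_of_carrier_eq_closure {S : NumericalSemigroup} {G : Set ℕ}
    (hG : S.carrier = AddSubmonoid.closure G) {a : ℕ} (ha : a ∈ S.carrier) (h0 : a ≠ 0)
    (hnd : ¬ S.IsDecomposable a) : a ∈ G := by
  have key : a = 0 ∨ a ∈ G ∨ S.IsDecomposable a := by
    clear h0 hnd
    rw [hG] at ha
    induction ha using AddSubmonoid.closure_induction with
    | mem x hx => exact .inr (.inl hx)
    | zero => exact .inl rfl
    | add x y hx hy ihx ihy =>
      rcases eq_or_ne x 0 with rfl | hx0
      · simpa using ihy
      rcases eq_or_ne y 0 with rfl | hy0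
      · simpa using ihx
      exact .inr (.inr ⟨x, hG ▸ hx, y, hG ▸ hy, hx0, hy0, rfl⟩)
  rcases key with h | h | h
  exacts [absurd h h0, h, absurd h hnd]

lemma mult_mem_of_carrier_eq_closure {S : NumericalSemigroup} {G : Set ℕ}
    (hG : S.carrier = AddSubmonoid.closure G) : S.mult ∈ G := by
  refine mem_of_carrier_eq_closure hG S.mult_mem S.mult_pos.ne' ?_
  rintro ⟨b, hb, c, hc, hb0, hc0, hbc⟩
  have := mult_le hb hb0
  have := mult_le hc hc0
  omega

lemma exists_closure_card_eq_embdim (S : NumericalSemigroup) :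
    ∃ G : Finset ℕ, S.carrier = AddSubmonoid.closure (G : Set ℕ) ∧ G.card = S.embdim := by
  have hne : {n | ∃ G : Finset ℕ, S.carrier = AddSubmonoid.closure (G : Set ℕ) ∧
      G.card = n}.Nonempty :=
    ⟨_, _, S.carrier_eq_closure_insert_mult_apery, rfl⟩
  obtain ⟨G, hG, hcard⟩ := Nat.sInf_mem hne
  exact ⟨G, hG, hcard⟩

lemma embdim_pos (S : NumericalSemigroup) : 0 < S.embdim := by
  obtain ⟨G, hG, hcard⟩ := S.exists_closure_card_eq_embdim
  exact hcard ▸ Finset.card_pos.mpr ⟨_, mult_mem_of_carrier_eq_closure hG⟩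

open Classical in
lemma mult_le_embdim_add_card_decomposable (S : NumericalSemigroup) :
    S.mult ≤ S.embdim + (S.apery_finite.toFinset.filter S.IsDecomposable).card := by
  obtain ⟨G, hG, hcard⟩ := S.exists_closure_card_eq_embdim
  have hindec :
      S.apery_finite.toFinset.filter (¬ S.IsDecomposable ·) ⊆ insert 0 (G.erase S.mult) := by
    intro a ha
    obtain ⟨haA, hnd⟩ := Finset.mem_filter.mp ha
    have haA := S.apery_finite.mem_toFinset.mp haA
    rcases eq_or_ne a 0 with rfl | h0
    · exact Finset.mem_insert_self _ _
    · refine Finset.mem_insert_of_mem (Finset.mem_erase.mpr ⟨?_, ?_⟩)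
      · rintro rfl; exact S.mult_notMem_apery haA
      · exact mem_of_carrier_eq_closure hG haA.1 h0 hnd
  have hle := (Finset.card_le_card hindec).trans (Finset.card_insert_le 0 (G.erase S.mult))
  rw [Finset.card_erase_of_mem (mult_mem_of_carrier_eq_closure hG)] at hle
  have hsplit := Finset.card_filter_add_card_filter_not (s := S.apery_finite.toFinset)
    S.IsDecomposable
  rw [card_apery] at hsplit
  have := S.embdim_pos
  omega

lemma exists_decomposable_mem_apery_ne {S : NumericalSemigroup} (h : 2 ≤ S.mult - S.embdim)
    (x : ℕ) : ∃ d ∈ S.apery, S.IsDecomposable d ∧ d ≠ x := by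
  classical
  have := S.mult_le_embdim_add_card_decomposable
  obtain ⟨d, hd, hne⟩ :=
    Finset.exists_mem_ne (s := S.apery_finite.toFinset.filter S.IsDecomposable) (by omega) x
  obtain ⟨hdA, hdD⟩ := Finset.mem_filter.mp hd
  exact ⟨d, S.apery_finite.mem_toFinset.mp hdA, hdD, hne⟩

lemma w_one_add_w_two_le {S : NumericalSemigroup} {d : ℕ} (hd : d ∈ S.apery)
    (hdec : S.IsDecomposable d) (hne : d ≠ S.w 1 + S.w 1) : S.w 1 + S.w 2 ≤ d := by
  obtain ⟨b, hb, c, hc, hb0, hc0, rfl⟩ := hdec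
  have hbA : b ∈ S.apery := mem_apery_of_add_mem_apery hb hc hd
  have hcA : c ∈ S.apery := mem_apery_of_add_mem_apery hc hb (add_comm b c ▸ hd)
  have hw0 := S.w_zero
  have hw1_le : ∀ x ∈ S.apery, x ≠ 0 → S.w 1 ≤ x := fun x hx hx0 =>
    S.w_le_of_mem_apery hx fun i hi => by rw [Nat.lt_one_iff.mp hi, hw0]; exact hx0.symm
  have hw2_le : ∀ x ∈ S.apery, x ≠ 0 → x ≠ S.w 1 → S.w 2 ≤ x := fun x hx hx0 hx1 =>
    S.w_le_of_mem_apery hx fun i hi => by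
      interval_cases i
      · rw [hw0]; exact hx0.symm
      · exact hx1.symm
  have := hw1_le b hbA hb0
  have := hw1_le c hcA hc0
  by_cases hb1 : b = S.w 1
  · have := hw2_le c hcA hc0 (fun hc1 => hne (by rw [hb1, hc1]))
    omega
  · have := hw2_le b hbA hb0 hb1
    omega

lemma mul_add_mod_mem {S : NumericalSemigroup} {a k : ℕ} (ha : a ∈ S.carrier)
    (hk : a / S.mult ≤ k) : k * S.mult + a % S.mult ∈ S.carrier := by
  obtain ⟨t, rfl⟩ : ∃ t, k = a / S.mult + t := ⟨k - a / S.mult, by omega⟩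
  convert add_mul_mult_mem ha t using 1
  have := Nat.div_add_mod' a S.mult
  rw [add_mul]
  omega

lemma div_mul_add_mod_mem_and_lt {S : NumericalSemigroup} {F a b : ℕ} (ha : a ∈ S.carrier)
    (hb : b ∈ S.carrier) (hb0 : b % S.mult ≠ 0)
    (hdiv : (F + S.mult) / S.mult = a / S.mult + b / S.mult) (hab : a + b ≤ F + S.mult) :
    F / S.mult * S.mult + a % S.mult ∈ S.carrier ∧ F / S.mult * S.mult + a % S.mult < F := by
  have hm := S.mult_pos
  have hbm : 1 ≤ b / S.mult :=
    (Nat.le_div_iff_mul_le hm).mpr (by simpa using mult_le hb fun h => hb0 (by simp [h]))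
  rw [Nat.add_div_right F hm] at hdiv
  refine ⟨mul_add_mod_mem ha (by omega), ?_⟩
  have hF := Nat.div_add_mod' F S.mult
  have ha' := Nat.div_add_mod' a S.mult
  have hb' := Nat.div_add_mod' b S.mult
  have hq : a / S.mult * S.mult + b / S.mult * S.mult = F / S.mult * S.mult + S.mult := by
    rw [← add_mul, ← hdiv, add_one_mul]
  omega

lemma card_le_nk_Lindex {S : NumericalSemigroup} {F : ℕ} (hfrob : S.frob = F) (T : Finset ℕ)
    (hT : ∀ s ∈ T, s ∈ S.carrier ∧ F / S.mult * S.mult ≤ s ∧ s < F) :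
    T.card ≤ S.nk S.Lindex.toNat := by
  have hL : S.Lindex.toNat = F / S.mult := by
    rw [Lindex, hfrob, ← Int.natCast_ediv, Int.toNat_natCast]
  rw [nk, hL, ← Set.ncard_coe_finset]
  refine Set.ncard_le_ncard (fun s hs => ?_) ((Set.finite_Ico _ _).subset fun s hs => hs.1.2)
  obtain ⟨hsS, hle, hlt⟩ := hT s hs
  refine ⟨⟨hsS, hle, ?_⟩, by omega⟩
  have := Nat.lt_div_mul_add (a := F) S.mult_pos
  rw [add_one_mul]
  omega

/-- If `m(S) - ν(S) ≥ 2` and `⌊w_{m-1}/m⌋ = ⌊w_1/m⌋ + ⌊w_2/m⌋`,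
then `n_L ≥ 3`. -/
theorem three_le_nL (S : NumericalSemigroup)
    (h : 2 ≤ S.mult - S.embdim)
    (heq : S.w (S.mult - 1) / S.mult = S.w 1 / S.mult + S.w 2 / S.mult) :
    3 ≤ S.nk S.Lindex.toNat := by
  have hm : 2 < S.mult := by have := S.embdim_pos; omega
  obtain ⟨F, hfrob, hF, hgt⟩ := exists_frob_eq (S := S) fun h1 => by
    have := mult_le h1 one_ne_zero; omega
  rw [w_mult_sub_one hF hgt] at heq
  have hw1 := S.w_mem_apery (j := 1) (by omega)
  have hw2 := S.w_mem_apery (j := 2) (by omega)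
  have hw01 := S.w_zero ▸ S.w_lt_w zero_lt_one (by omega)
  have hw12 := S.w_lt_w one_lt_two hm
  have hr1 := mod_ne_zero_of_mem_apery hw1 (by omega)
  have hr2 := mod_ne_zero_of_mem_apery hw2 (by omega)
  have hr12 : S.w 1 % S.mult ≠ S.w 2 % S.mult := fun h => hw12.ne (S.apery_injOn_mod hw1 hw2 h)
  obtain ⟨d, hd, hdec, hne⟩ := exists_decomposable_mem_apery_ne h (S.w 1 + S.w 1)
  have hle : S.w 1 + S.w 2 ≤ F + S.mult :=
    (w_one_add_w_two_le hd hdec hne).trans (le_add_mult_of_mem_apery hgt hd)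
  obtain ⟨hmem1, hlt1⟩ := div_mul_add_mod_mem_and_lt hw1.1 hw2.1 hr2 heq hle
  obtain ⟨hmem2, hlt2⟩ :=
    div_mul_add_mod_mem_and_lt (F := F) hw2.1 hw1.1 hr1 (by omega) (by omega)
  set Lm := F / S.mult * S.mult
  calc 3 = ({Lm, Lm + S.w 1 % S.mult, Lm + S.w 2 % S.mult} : Finset ℕ).card :=
        (Finset.card_eq_three.mpr ⟨_, _, _, by omega, by omega, by omega, rfl⟩).symm
    _ ≤ S.nk S.Lindex.toNat := card_le_nk_Lindex hfrob _ <| by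
        simp only [Finset.mem_insert, Finset.mem_singleton]
        rintro s (rfl | rfl | rfl)
        exacts [⟨S.mul_mult_mem _, le_rfl, by omega⟩, ⟨hmem1, by omega, hlt1⟩,
          ⟨hmem2, by omega, hlt2⟩]

end NumericalSemigroup
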